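/- Let I_r, I_θ ⊆ ℝ be open intervals and let f, ω, λ, β, γ : I_r × I_θ → ℝ be smooth with f, λ, β, γ > 0. On U = ℝ × I_r × I_θ × ℝ with coordinates x = (t, r, θ, φ) define the stationary axisymmetric metric g(r,θ) with nonzero entries g_tt = −f, g_tφ = g_φt = fω, g_φφ = γ − fω², g_rr = λ, g_θθ = β (so det g = −fγλβ ≠ 0 and g⁻¹ is its matrix inverse), and let 𝒢 = [[−f, fω],[fω, γ−fω²]] be the Gram matrix of the Killing vectors ∂_t, ∂_φ, with inverse 𝒢⁻¹ = (1/γ)·[[ω² − γ/f, ω],[ω, 1]]. Assume: (i) the compatibility condition ∂_θ(λ · ∂_r ln β) = 0 holds on I_r × I_θ; (ii) there exist smooth A, B : I_θ → ℝ and a smooth α : I_r → ℝ with α′ nowhere vanishing such that α(r) = A(θ)·β(r,θ) + B(θ) for all (r,θ); (iii) there exist smooth symmetric 2×2 matrix functions c : I_r → Sym(2,ℝ) and μ : I_θ → Sym(2,ℝ) such that −A(θ)·β(r,θ)·(𝒢⁻¹)^{ab}(r,θ) = c^{ab}(r) + μ^{ab}(θ) for all (r,θ) and a,b ∈ {t,φ}.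 Then the symmetric matrix field K defined by K^{μν}(r,θ) = α(r)·(g⁻¹)^{μν} + Σ_{a,b∈{t,φ}} c^{ab}(r)·δ_a^μ δ_b^ν − A(θ)·β(r,θ)·λ(r,θ)⁻¹·δ_r^μ δ_r^ν is a Killing tensor for g⁻¹, i.e. {H, F_K} = 0 identically on U × ℝ⁴. -/

import Mathlib

open Real

noncomputable section

/-- Partial derivative of a phase-space function with respect to the `μ`-th
position coordinate. -/
def pdx {n : ℕ} (μ : Fin n) (F : (Fin n → ℝ) × (Fin n → ℝ) → ℝ)
    (z : (Fin n → ℝ) × (Fin n → ℝ)) : ℝ :=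
  deriv (fun s => F (Function.update z.1 μ s, z.2)) (z.1 μ)

/-- Partial derivative of a phase-space function with respect to the `μ`-th
momentum coordinate. -/
def pdp {n : ℕ} (μ : Fin n) (F : (Fin n → ℝ) × (Fin n → ℝ) → ℝ)
    (z : (Fin n → ℝ) × (Fin n → ℝ)) : ℝ :=
  deriv (fun s => F (z.1, Function.update z.2 μ s)) (z.2 μ)

/-- Canonical Poisson bracket. -/
def poisson {n : ℕ} (A B : (Fin n → ℝ) × (Fin n → ℝ) → ℝ)
    (z : (Fin n → ℝ) × (Fin n → ℝ)) : ℝ :=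
  ∑ μ : Fin n, (pdp μ A z * pdx μ B z - pdx μ A z * pdp μ B z)

/-- Quadratic momentum function of a matrix field depending on `(r,θ) = (x 1, x 2)`. -/
def quadF4 (K : ℝ → ℝ → Matrix (Fin 4) (Fin 4) ℝ)
    (z : (Fin 4 → ℝ) × (Fin 4 → ℝ)) : ℝ :=
  ∑ μ : Fin 4, ∑ ν : Fin 4, K (z.1 1) (z.1 2) μ ν * z.2 μ * z.2 ν

/-- The stationary axisymmetric metric
`ds² = −f(dt−ωdφ)² + λdr² + βdθ² + γdφ²` in coordinates `(t,r,θ,φ)`. -/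
def axiMetric (f ω lam β γ : ℝ → ℝ → ℝ) (r θ : ℝ) : Matrix (Fin 4) (Fin 4) ℝ :=
  Matrix.of
    ![![-(f r θ), 0, 0, f r θ * ω r θ],
      ![0, lam r θ, 0, 0],
      ![0, 0, β r θ, 0],
      ![f r θ * ω r θ, 0, 0, γ r θ - f r θ * (ω r θ)^2]]

/-- The inverse `𝒢⁻¹ = (1/γ)·[[ω² − γ/f, ω],[ω, 1]]` of the Gram matrix
`𝒢 = [[−f, fω],[fω, γ−fω²]]` of the Killing vectors `∂_t, ∂_φ`. -/
def gramInv (f ω γ : ℝ → ℝ → ℝ) (r θ : ℝ) : Matrix (Fin 2) (Fin 2) ℝ :=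
  (γ r θ)⁻¹ • Matrix.of
    ![![(ω r θ)^2 - γ r θ / f r θ, ω r θ],
      ![ω r θ, 1]]

/-- The matrix with only nonzero entry `1` at the `(r,r)` position. -/
def Err : Matrix (Fin 4) (Fin 4) ℝ :=
  Matrix.of ![![0,0,0,0], ![0,1,0,0], ![0,0,0,0], ![0,0,0,0]]

/-- Lift of a symmetric `2×2` matrix to the `(t,φ)`-block of a `4×4` matrix. -/
def tφBlock (c : Matrix (Fin 2) (Fin 2) ℝ) : Matrix (Fin 4) (Fin 4) ℝ :=
  Matrix.of
    ![![c 0 0, 0, 0, c 0 1],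
      ![0, 0, 0, 0],
      ![0, 0, 0, 0],
      ![c 1 0, 0, 0, c 1 1]]


/-! ### Auxiliary machinery -/

def qf (a b c d e : ℝ → ℝ → ℝ) : (Fin 4 → ℝ) × (Fin 4 → ℝ) → ℝ :=
  fun z => a (z.1 1) (z.1 2) * (z.2 0)^2 + 2 * b (z.1 1) (z.1 2) * (z.2 0) * (z.2 3)
    + c (z.1 1) (z.1 2) * (z.2 1)^2 + d (z.1 1) (z.1 2) * (z.2 2)^2
    + e (z.1 1) (z.1 2) * (z.2 3)^2

section auxlem

variable {a b c d e : ℝ → ℝ → ℝ} {z : (Fin 4 → ℝ) × (Fin 4 → ℝ)} {a' b' c' d' e' : ℝ}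

lemma hda_congr {f : ℝ → ℝ} {v v' x : ℝ} (h : HasDerivAt f v x) (hv : v' = v) :
    HasDerivAt f v' x := hv ▸ h

lemma pdx0_qf : pdx 0 (qf a b c d e) z = 0 := by
  unfold pdx qf
  simp

lemma pdx3_qf : pdx 3 (qf a b c d e) z = 0 := by
  unfold pdx qf
  simp

lemma pdx1_qf (ha : HasDerivAt (fun s => a s (z.1 2)) a' (z.1 1))
    (hb : HasDerivAt (fun s => b s (z.1 2)) b' (z.1 1))
    (hc : HasDerivAt (fun s => c s (z.1 2)) c' (z.1 1))
    (hd : HasDerivAt (fun s => d s (z.1 2)) d' (z.1 1))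
    (he : HasDerivAt (fun s => e s (z.1 2)) e' (z.1 1)) :
    pdx 1 (qf a b c d e) z = a' * (z.2 0)^2 + 2 * b' * (z.2 0) * (z.2 3)
      + c' * (z.2 1)^2 + d' * (z.2 2)^2 + e' * (z.2 3)^2 := by
  unfold pdx qf
  simp only [Function.update_self, Function.update_of_ne (by decide : (1:Fin 4) ≠ 0),
    Function.update_of_ne (by decide : (2:Fin 4) ≠ 1)]
  have H : HasDerivAt (fun s => a s (z.1 2) * z.2 0 ^ 2 + 2 * b s (z.1 2) * z.2 0 * z.2 3
      + c s (z.1 2) * z.2 1 ^ 2 + d s (z.1 2) * z.2 2 ^ 2 + e s (z.1 2) * z.2 3 ^ 2)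
      (a' * z.2 0 ^ 2 + 2 * b' * z.2 0 * z.2 3 + c' * z.2 1 ^ 2 + d' * z.2 2 ^ 2
        + e' * z.2 3 ^ 2) (z.1 1) := by
    have h2 : HasDerivAt (fun s => 2 * b s (z.1 2) * z.2 0 * z.2 3)
        (2 * b' * z.2 0 * z.2 3) (z.1 1) := ((hb.const_mul 2).mul_const _).mul_const _
    exact ((((ha.mul_const _).add h2).add (hc.mul_const _)).add (hd.mul_const _)).add
      (he.mul_const _)
  exact H.deriv

lemma pdx2_qf (ha : HasDerivAt (fun s => a (z.1 1) s) a' (z.1 2))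
    (hb : HasDerivAt (fun s => b (z.1 1) s) b' (z.1 2))
    (hc : HasDerivAt (fun s => c (z.1 1) s) c' (z.1 2))
    (hd : HasDerivAt (fun s => d (z.1 1) s) d' (z.1 2))
    (he : HasDerivAt (fun s => e (z.1 1) s) e' (z.1 2)) :
    pdx 2 (qf a b c d e) z = a' * (z.2 0)^2 + 2 * b' * (z.2 0) * (z.2 3)
      + c' * (z.2 1)^2 + d' * (z.2 2)^2 + e' * (z.2 3)^2 := by
  unfold pdx qf
  simp only [Function.update_self, Function.update_of_ne (by decide : (1:Fin 4) ≠ 2),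
    Function.update_of_ne (by decide : (2:Fin 4) ≠ 1)]
  have H : HasDerivAt (fun s => a (z.1 1) s * z.2 0 ^ 2 + 2 * b (z.1 1) s * z.2 0 * z.2 3
      + c (z.1 1) s * z.2 1 ^ 2 + d (z.1 1) s * z.2 2 ^ 2 + e (z.1 1) s * z.2 3 ^ 2)
      (a' * z.2 0 ^ 2 + 2 * b' * z.2 0 * z.2 3 + c' * z.2 1 ^ 2 + d' * z.2 2 ^ 2
        + e' * z.2 3 ^ 2) (z.1 2) := by
    have h2 : HasDerivAt (fun s => 2 * b (z.1 1) s * z.2 0 * z.2 3)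
        (2 * b' * z.2 0 * z.2 3) (z.1 2) := ((hb.const_mul 2).mul_const _).mul_const _
    exact ((((ha.mul_const _).add h2).add (hc.mul_const _)).add (hd.mul_const _)).add
      (he.mul_const _)
  exact H.deriv

lemma pdp0_qf : pdp 0 (qf a b c d e) z
    = 2 * a (z.1 1) (z.1 2) * z.2 0 + 2 * b (z.1 1) (z.1 2) * z.2 3 := by
  unfold pdp qf
  simp only [Function.update_self, Function.update_of_ne (by decide : (1:Fin 4) ≠ 0),
    Function.update_of_ne (by decide : (2:Fin 4) ≠ 0),
    Function.update_of_ne (by decide : (3:Fin 4) ≠ 0)]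
  have h1 : HasDerivAt (fun s : ℝ => a (z.1 1) (z.1 2) * s ^ 2)
      (a (z.1 1) (z.1 2) * (2 * z.2 0)) (z.2 0) := by
    simpa using (hasDerivAt_pow 2 (z.2 0)).const_mul (a (z.1 1) (z.1 2))
  have h2 : HasDerivAt (fun s : ℝ => 2 * b (z.1 1) (z.1 2) * s * z.2 3)
      (2 * b (z.1 1) (z.1 2) * z.2 3) (z.2 0) := by
    simpa using ((hasDerivAt_id (z.2 0)).const_mul (2 * b (z.1 1) (z.1 2))).mul_const (z.2 3)
  have H := hda_congr ((((h1.add h2).add_const (c (z.1 1) (z.1 2) * z.2 1 ^ 2)).add_const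
      (d (z.1 1) (z.1 2) * z.2 2 ^ 2)).add_const (e (z.1 1) (z.1 2) * z.2 3 ^ 2))
      (show 2 * a (z.1 1) (z.1 2) * z.2 0 + 2 * b (z.1 1) (z.1 2) * z.2 3 = _ by ring)
  exact H.deriv

lemma pdp1_qf : pdp 1 (qf a b c d e) z = 2 * c (z.1 1) (z.1 2) * z.2 1 := by
  unfold pdp qf
  simp only [Function.update_self, Function.update_of_ne (by decide : (0:Fin 4) ≠ 1),
    Function.update_of_ne (by decide : (2:Fin 4) ≠ 1),
    Function.update_of_ne (by decide : (3:Fin 4) ≠ 1)]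
  have h1 : HasDerivAt (fun s : ℝ => c (z.1 1) (z.1 2) * s ^ 2)
      (c (z.1 1) (z.1 2) * (2 * z.2 1)) (z.2 1) := by
    simpa using (hasDerivAt_pow 2 (z.2 1)).const_mul (c (z.1 1) (z.1 2))
  have H := hda_congr (((h1.const_add
      (a (z.1 1) (z.1 2) * z.2 0 ^ 2 + 2 * b (z.1 1) (z.1 2) * z.2 0 * z.2 3)).add_const
      (d (z.1 1) (z.1 2) * z.2 2 ^ 2)).add_const (e (z.1 1) (z.1 2) * z.2 3 ^ 2))
      (show 2 * c (z.1 1) (z.1 2) * z.2 1 = _ by ring)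
  exact H.deriv

lemma pdp2_qf : pdp 2 (qf a b c d e) z = 2 * d (z.1 1) (z.1 2) * z.2 2 := by
  unfold pdp qf
  simp only [Function.update_self, Function.update_of_ne (by decide : (0:Fin 4) ≠ 2),
    Function.update_of_ne (by decide : (1:Fin 4) ≠ 2),
    Function.update_of_ne (by decide : (3:Fin 4) ≠ 2)]
  have h1 : HasDerivAt (fun s : ℝ => d (z.1 1) (z.1 2) * s ^ 2)
      (d (z.1 1) (z.1 2) * (2 * z.2 2)) (z.2 2) := by
    simpa using (hasDerivAt_pow 2 (z.2 2)).const_mul (d (z.1 1) (z.1 2))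
  have H := hda_congr ((h1.const_add
      (a (z.1 1) (z.1 2) * z.2 0 ^ 2 + 2 * b (z.1 1) (z.1 2) * z.2 0 * z.2 3
        + c (z.1 1) (z.1 2) * z.2 1 ^ 2)).add_const (e (z.1 1) (z.1 2) * z.2 3 ^ 2))
      (show 2 * d (z.1 1) (z.1 2) * z.2 2 = _ by ring)
  exact H.deriv

lemma pdp3_qf : pdp 3 (qf a b c d e) z
    = 2 * b (z.1 1) (z.1 2) * z.2 0 + 2 * e (z.1 1) (z.1 2) * z.2 3 := by
  unfold pdp qf
  simp only [Function.update_self, Function.update_of_ne (by decide : (0:Fin 4) ≠ 3),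
    Function.update_of_ne (by decide : (1:Fin 4) ≠ 3),
    Function.update_of_ne (by decide : (2:Fin 4) ≠ 3)]
  have h2 : HasDerivAt (fun s : ℝ => 2 * b (z.1 1) (z.1 2) * z.2 0 * s)
      (2 * b (z.1 1) (z.1 2) * z.2 0) (z.2 3) := by
    simpa using (hasDerivAt_id (z.2 3)).const_mul (2 * b (z.1 1) (z.1 2) * z.2 0)
  have h5 : HasDerivAt (fun s : ℝ => e (z.1 1) (z.1 2) * s ^ 2)
      (e (z.1 1) (z.1 2) * (2 * z.2 3)) (z.2 3) := by
    simpa using (hasDerivAt_pow 2 (z.2 3)).const_mul (e (z.1 1) (z.1 2))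
  have H := hda_congr ((((h2.const_add (a (z.1 1) (z.1 2) * z.2 0 ^ 2)).add_const
      (c (z.1 1) (z.1 2) * z.2 1 ^ 2)).add_const (d (z.1 1) (z.1 2) * z.2 2 ^ 2)).add h5)
      (show 2 * b (z.1 1) (z.1 2) * z.2 0 + 2 * e (z.1 1) (z.1 2) * z.2 3 = _ by ring)
  exact H.deriv

lemma pdx_congr {n : ℕ} {μ : Fin n} {F G : (Fin n → ℝ) × (Fin n → ℝ) → ℝ}
    {z : (Fin n → ℝ) × (Fin n → ℝ)}
    (h : ∀ᶠ s in nhds (z.1 μ), F (Function.update z.1 μ s, z.2)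
      = G (Function.update z.1 μ s, z.2)) : pdx μ F z = pdx μ G z :=
  Filter.EventuallyEq.deriv_eq h

lemma pdp_congr {n : ℕ} {μ : Fin n} {F G : (Fin n → ℝ) × (Fin n → ℝ) → ℝ}
    {z : (Fin n → ℝ) × (Fin n → ℝ)}
    (h : ∀ s, F (z.1, Function.update z.2 μ s) = G (z.1, Function.update z.2 μ s)) :
    pdp μ F z = pdp μ G z := by
  unfold pdp
  rw [funext h]

end auxlem

def E0f (f ω γ : ℝ → ℝ → ℝ) (r θ : ℝ) : ℝ := (γ r θ)⁻¹ * ((ω r θ)^2 - γ r θ / f r θ)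
def E1f (ω γ : ℝ → ℝ → ℝ) (r θ : ℝ) : ℝ := (γ r θ)⁻¹ * ω r θ
def E2f (γ : ℝ → ℝ → ℝ) (r θ : ℝ) : ℝ := (γ r θ)⁻¹

def Ginv4 (f ω lam β γ : ℝ → ℝ → ℝ) (r θ : ℝ) : Matrix (Fin 4) (Fin 4) ℝ :=
  Matrix.of
    ![![E0f f ω γ r θ, 0, 0, E1f ω γ r θ],
      ![0, (lam r θ)⁻¹, 0, 0],
      ![0, 0, (β r θ)⁻¹, 0],
      ![E1f ω γ r θ, 0, 0, E2f γ r θ]]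

lemma axiMetric_inv {f ω lam β γ : ℝ → ℝ → ℝ} {r θ : ℝ}
    (hf : f r θ ≠ 0) (hl : lam r θ ≠ 0) (hb : β r θ ≠ 0) (hg : γ r θ ≠ 0) :
    (axiMetric f ω lam β γ r θ)⁻¹ = Ginv4 f ω lam β γ r θ := by
  apply Matrix.inv_eq_right_inv
  ext i j
  fin_cases i <;> fin_cases j <;>
    simp [axiMetric, Ginv4, E0f, E1f, E2f, Matrix.mul_apply, Fin.sum_univ_four,
      Matrix.one_apply, Matrix.vecHead, Matrix.vecTail] <;> field_simp <;> ring

lemma quadF4_eq_qf {K : ℝ → ℝ → Matrix (Fin 4) (Fin 4) ℝ} {a b c d e : ℝ → ℝ → ℝ}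
    {z : (Fin 4 → ℝ) × (Fin 4 → ℝ)}
    (hK : K (z.1 1) (z.1 2) = Matrix.of
      ![![a (z.1 1) (z.1 2), 0, 0, b (z.1 1) (z.1 2)],
        ![0, c (z.1 1) (z.1 2), 0, 0],
        ![0, 0, d (z.1 1) (z.1 2), 0],
        ![b (z.1 1) (z.1 2), 0, 0, e (z.1 1) (z.1 2)]]) :
    quadF4 K z = qf a b c d e z := by
  unfold quadF4 qf
  rw [hK]
  simp [Fin.sum_univ_four, Matrix.vecHead, Matrix.vecTail]
  ring

lemma sliceR {F : ℝ → ℝ → ℝ} {Ir Iθ : Set ℝ} (hIr : IsOpen Ir) (hIθ : IsOpen Iθ)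
    (h : ContDiffOn ℝ (⊤ : ℕ∞) (fun q : ℝ × ℝ => F q.1 q.2) (Ir ×ˢ Iθ)) {r θ : ℝ}
    (hr : r ∈ Ir) (hθ : θ ∈ Iθ) : DifferentiableAt ℝ (fun r' => F r' θ) r := by
  have hD : DifferentiableAt ℝ (fun q : ℝ × ℝ => F q.1 q.2) (r, θ) :=
    (h.contDiffAt ((hIr.prod hIθ).mem_nhds ⟨hr, hθ⟩)).differentiableAt (by simp)
  exact hD.comp r (show DifferentiableAt ℝ (fun r' : ℝ => (r', θ)) r from
    differentiableAt_id.prodMk (differentiableAt_const θ))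

lemma sliceT {F : ℝ → ℝ → ℝ} {Ir Iθ : Set ℝ} (hIr : IsOpen Ir) (hIθ : IsOpen Iθ)
    (h : ContDiffOn ℝ (⊤ : ℕ∞) (fun q : ℝ × ℝ => F q.1 q.2) (Ir ×ˢ Iθ)) {r θ : ℝ}
    (hr : r ∈ Ir) (hθ : θ ∈ Iθ) : DifferentiableAt ℝ (fun θ' => F r θ') θ := by
  have hD : DifferentiableAt ℝ (fun q : ℝ × ℝ => F q.1 q.2) (r, θ) :=
    (h.contDiffAt ((hIr.prod hIθ).mem_nhds ⟨hr, hθ⟩)).differentiableAt (by simp)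
  exact hD.comp θ ((differentiableAt_const r).prodMk differentiableAt_id)

lemma diffAt_of_contDiffOn {F : ℝ → ℝ} {s : Set ℝ} (hs : IsOpen s)
    (h : ContDiffOn ℝ (⊤ : ℕ∞) F s) {x : ℝ} (hx : x ∈ s) : DifferentiableAt ℝ F x :=
  (h.contDiffAt (hs.mem_nhds hx)).differentiableAt (by simp)

set_option maxHeartbeats 2000000 in
/-- The Killing-tensor generation theorem for stationary
axisymmetric metrics foliated by the hypersurfaces `r = const`. -/
theorem axisymmetric_killing_tensor_generation
    (Ir Iθ : Set ℝ) (hIrOpen : IsOpen Ir) (hIθOpen : IsOpen Iθ)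
    (hIrConn : Ir.OrdConnected) (hIθConn : Iθ.OrdConnected)
    (f ω lam β γ : ℝ → ℝ → ℝ)
    (hf : ContDiffOn ℝ (⊤ : ℕ∞) (fun q : ℝ × ℝ => f q.1 q.2) (Ir ×ˢ Iθ))
    (hω : ContDiffOn ℝ (⊤ : ℕ∞) (fun q : ℝ × ℝ => ω q.1 q.2) (Ir ×ˢ Iθ))
    (hlam : ContDiffOn ℝ (⊤ : ℕ∞) (fun q : ℝ × ℝ => lam q.1 q.2) (Ir ×ˢ Iθ))
    (hβ : ContDiffOn ℝ (⊤ : ℕ∞) (fun q : ℝ × ℝ => β q.1 q.2) (Ir ×ˢ Iθ))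
    (hγ : ContDiffOn ℝ (⊤ : ℕ∞) (fun q : ℝ × ℝ => γ q.1 q.2) (Ir ×ˢ Iθ))
    (hfpos : ∀ r ∈ Ir, ∀ θ ∈ Iθ, 0 < f r θ)
    (hlampos : ∀ r ∈ Ir, ∀ θ ∈ Iθ, 0 < lam r θ)
    (hβpos : ∀ r ∈ Ir, ∀ θ ∈ Iθ, 0 < β r θ)
    (hγpos : ∀ r ∈ Ir, ∀ θ ∈ Iθ, 0 < γ r θ)
    -- (i) compatibility condition ∂_θ(λ·∂_r ln β) = 0
    (hcompat : ∀ r ∈ Ir, ∀ θ ∈ Iθ,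
      deriv (fun θ' => lam r θ' * deriv (fun r' => Real.log (β r' θ')) r) θ = 0)
    -- (ii) α(r) = A(θ)·β(r,θ) + B(θ) with α′ nowhere vanishing
    (A B α : ℝ → ℝ)
    (hA : ContDiffOn ℝ (⊤ : ℕ∞) A Iθ) (hB : ContDiffOn ℝ (⊤ : ℕ∞) B Iθ)
    (hα : ContDiffOn ℝ (⊤ : ℕ∞) α Ir)
    (hα' : ∀ r ∈ Ir, deriv α r ≠ 0)
    (hαeq : ∀ r ∈ Ir, ∀ θ ∈ Iθ, α r = A θ * β r θ + B θ)
    -- (iii) −A·β·𝒢⁻¹ = c(r) + μ(θ) with c, μ symmetric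
    (c μmat : ℝ → Matrix (Fin 2) (Fin 2) ℝ)
    (hc : ∀ a b : Fin 2, ContDiffOn ℝ (⊤ : ℕ∞) (fun r => c r a b) Ir)
    (hμ : ∀ a b : Fin 2, ContDiffOn ℝ (⊤ : ℕ∞) (fun θ => μmat θ a b) Iθ)
    (hcsymm : ∀ r ∈ Ir, (c r).IsSymm)
    (hμsymm : ∀ θ ∈ Iθ, (μmat θ).IsSymm)
    (hsplit : ∀ r ∈ Ir, ∀ θ ∈ Iθ, ∀ a b : Fin 2,
      -(A θ) * β r θ * gramInv f ω γ r θ a b = c r a b + μmat θ a b) :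
    -- conclusion: K is a Killing tensor for g⁻¹
    ∀ x : Fin 4 → ℝ, x 1 ∈ Ir → x 2 ∈ Iθ → ∀ p : Fin 4 → ℝ,
      poisson
        (quadF4 (fun r θ => (axiMetric f ω lam β γ r θ)⁻¹))
        (quadF4 (fun r θ =>
          α r • (axiMetric f ω lam β γ r θ)⁻¹ + tφBlock (c r)
            + (-(A θ) * β r θ * (lam r θ)⁻¹) • Err))
        (x, p) = 0 := by
  intro x hx1 hx2 p
  set KK : ℝ → ℝ → Matrix (Fin 4) (Fin 4) ℝ := fun r θ =>
    α r • (axiMetric f ω lam β γ r θ)⁻¹ + tφBlock (c r)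
      + (-(A θ) * β r θ * (lam r θ)⁻¹) • Err with hKK
  set Kg : ℝ → ℝ → Matrix (Fin 4) (Fin 4) ℝ :=
    fun r θ => (axiMetric f ω lam β γ r θ)⁻¹ with hKg
  -- nonvanishing at the base point
  have fne : f (x 1) (x 2) ≠ 0 := (hfpos _ hx1 _ hx2).ne'
  have lne : lam (x 1) (x 2) ≠ 0 := (hlampos _ hx1 _ hx2).ne'
  have bne : β (x 1) (x 2) ≠ 0 := (hβpos _ hx1 _ hx2).ne'
  have gne : γ (x 1) (x 2) ≠ 0 := (hγpos _ hx1 _ hx2).ne'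
  -- slice differentiability at the base point
  have dfr : DifferentiableAt ℝ (fun r' => f r' (x 2)) (x 1) := sliceR hIrOpen hIθOpen hf hx1 hx2
  have dft : DifferentiableAt ℝ (fun θ' => f (x 1) θ') (x 2) := sliceT hIrOpen hIθOpen hf hx1 hx2
  have dωr : DifferentiableAt ℝ (fun r' => ω r' (x 2)) (x 1) := sliceR hIrOpen hIθOpen hω hx1 hx2
  have dωt : DifferentiableAt ℝ (fun θ' => ω (x 1) θ') (x 2) := sliceT hIrOpen hIθOpen hω hx1 hx2
  have dlr : DifferentiableAt ℝ (fun r' => lam r' (x 2)) (x 1) :=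
    sliceR hIrOpen hIθOpen hlam hx1 hx2
  have dlt : DifferentiableAt ℝ (fun θ' => lam (x 1) θ') (x 2) :=
    sliceT hIrOpen hIθOpen hlam hx1 hx2
  have dbr : DifferentiableAt ℝ (fun r' => β r' (x 2)) (x 1) := sliceR hIrOpen hIθOpen hβ hx1 hx2
  have dbt : DifferentiableAt ℝ (fun θ' => β (x 1) θ') (x 2) := sliceT hIrOpen hIθOpen hβ hx1 hx2
  have dgr : DifferentiableAt ℝ (fun r' => γ r' (x 2)) (x 1) := sliceR hIrOpen hIθOpen hγ hx1 hx2
  have dgt : DifferentiableAt ℝ (fun θ' => γ (x 1) θ') (x 2) := sliceT hIrOpen hIθOpen hγ hx1 hx2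
  have dA : DifferentiableAt ℝ A (x 2) := diffAt_of_contDiffOn hIθOpen hA hx2
  have dB : DifferentiableAt ℝ B (x 2) := diffAt_of_contDiffOn hIθOpen hB hx2
  have dμ00 : DifferentiableAt ℝ (fun θ' => μmat θ' 0 0) (x 2) :=
    diffAt_of_contDiffOn hIθOpen (hμ 0 0) hx2
  have dμ01 : DifferentiableAt ℝ (fun θ' => μmat θ' 0 1) (x 2) :=
    diffAt_of_contDiffOn hIθOpen (hμ 0 1) hx2
  have dμ11 : DifferentiableAt ℝ (fun θ' => μmat θ' 1 1) (x 2) :=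
    diffAt_of_contDiffOn hIθOpen (hμ 1 1) hx2
  -- derivatives of the inverse-metric coefficient slices
  have dE0r : DifferentiableAt ℝ (fun r' => E0f f ω γ r' (x 2)) (x 1) := by
    unfold E0f; exact (dgr.inv gne).mul ((dωr.pow 2).sub (dgr.div dfr fne))
  have dE0t : DifferentiableAt ℝ (fun θ' => E0f f ω γ (x 1) θ') (x 2) := by
    unfold E0f; exact (dgt.inv gne).mul ((dωt.pow 2).sub (dgt.div dft fne))
  have dE1r : DifferentiableAt ℝ (fun r' => E1f ω γ r' (x 2)) (x 1) := by
    unfold E1f; exact (dgr.inv gne).mul dωr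
  have dE1t : DifferentiableAt ℝ (fun θ' => E1f ω γ (x 1) θ') (x 2) := by
    unfold E1f; exact (dgt.inv gne).mul dωt
  have dE2r : DifferentiableAt ℝ (fun r' => E2f γ r' (x 2)) (x 1) := by
    unfold E2f; exact dgr.inv gne
  have dE2t : DifferentiableAt ℝ (fun θ' => E2f γ (x 1) θ') (x 2) := by
    unfold E2f; exact dgt.inv gne
  have hE0r : HasDerivAt (fun r' => E0f f ω γ r' (x 2))
      (deriv (fun r' => E0f f ω γ r' (x 2)) (x 1)) (x 1) := dE0r.hasDerivAt
  have hE0t : HasDerivAt (fun θ' => E0f f ω γ (x 1) θ')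
      (deriv (fun θ' => E0f f ω γ (x 1) θ') (x 2)) (x 2) := dE0t.hasDerivAt
  have hE1r : HasDerivAt (fun r' => E1f ω γ r' (x 2))
      (deriv (fun r' => E1f ω γ r' (x 2)) (x 1)) (x 1) := dE1r.hasDerivAt
  have hE1t : HasDerivAt (fun θ' => E1f ω γ (x 1) θ')
      (deriv (fun θ' => E1f ω γ (x 1) θ') (x 2)) (x 2) := dE1t.hasDerivAt
  have hE2r : HasDerivAt (fun r' => E2f γ r' (x 2))
      (deriv (fun r' => E2f γ r' (x 2)) (x 1)) (x 1) := dE2r.hasDerivAt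
  have hE2t : HasDerivAt (fun θ' => E2f γ (x 1) θ')
      (deriv (fun θ' => E2f γ (x 1) θ') (x 2)) (x 2) := dE2t.hasDerivAt
  have hilr : HasDerivAt (fun r' => (lam r' (x 2))⁻¹)
      (-deriv (fun r' => lam r' (x 2)) (x 1) / lam (x 1) (x 2) ^ 2) (x 1) :=
    dlr.hasDerivAt.inv lne
  have hilt : HasDerivAt (fun θ' => (lam (x 1) θ')⁻¹)
      (-deriv (fun θ' => lam (x 1) θ') (x 2) / lam (x 1) (x 2) ^ 2) (x 2) :=
    dlt.hasDerivAt.inv lne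
  have hiβr : HasDerivAt (fun r' => (β r' (x 2))⁻¹)
      (-deriv (fun r' => β r' (x 2)) (x 1) / β (x 1) (x 2) ^ 2) (x 1) :=
    dbr.hasDerivAt.inv bne
  have hiβt : HasDerivAt (fun θ' => (β (x 1) θ')⁻¹)
      (-deriv (fun θ' => β (x 1) θ') (x 2) / β (x 1) (x 2) ^ 2) (x 2) :=
    dbt.hasDerivAt.inv bne
  -- the inverse metric on the region
  have hinv : ∀ r ∈ Ir, ∀ θ ∈ Iθ,
      (axiMetric f ω lam β γ r θ)⁻¹ = Ginv4 f ω lam β γ r θ := fun r hr θ hθ =>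
    axiMetric_inv (hfpos r hr θ hθ).ne' (hlampos r hr θ hθ).ne' (hβpos r hr θ hθ).ne'
      (hγpos r hr θ hθ).ne'
  -- entries of gramInv
  have hg00 : ∀ r θ : ℝ, gramInv f ω γ r θ 0 0 = E0f f ω γ r θ := fun r θ => by
    simp [gramInv, E0f]
  have hg01 : ∀ r θ : ℝ, gramInv f ω γ r θ 0 1 = E1f ω γ r θ := fun r θ => by
    simp [gramInv, E1f]
  have hg10 : ∀ r θ : ℝ, gramInv f ω γ r θ 1 0 = E1f ω γ r θ := fun r θ => by
    simp [gramInv, E1f]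
  have hg11 : ∀ r θ : ℝ, gramInv f ω γ r θ 1 1 = E2f γ r θ := fun r θ => by
    simp [gramInv, E2f]
  -- the Killing tensor field рewritten in c-free form
  have hKmat : ∀ r ∈ Ir, ∀ θ ∈ Iθ, KK r θ = Matrix.of
      ![![B θ * E0f f ω γ r θ - μmat θ 0 0, 0, 0, B θ * E1f ω γ r θ - μmat θ 0 1],
        ![0, B θ * (lam r θ)⁻¹, 0, 0],
        ![0, 0, A θ + B θ * (β r θ)⁻¹, 0],
        ![B θ * E1f ω γ r θ - μmat θ 0 1, 0, 0, B θ * E2f γ r θ - μmat θ 1 1]] := by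
    intro r hr θ hθ
    have hae := hαeq r hr θ hθ
    have hbne' := (hβpos r hr θ hθ).ne'
    have hlne' := (hlampos r hr θ hθ).ne'
    have hsp00 : -(A θ) * β r θ * E0f f ω γ r θ = c r 0 0 + μmat θ 0 0 := by
      rw [← hg00 r θ]; exact hsplit r hr θ hθ 0 0
    have hsp01 : -(A θ) * β r θ * E1f ω γ r θ = c r 0 1 + μmat θ 0 1 := by
      rw [← hg01 r θ]; exact hsplit r hr θ hθ 0 1
    have hsp10 : -(A θ) * β r θ * E1f ω γ r θ = c r 1 0 + μmat θ 1 0 := by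
      rw [← hg10 r θ]; exact hsplit r hr θ hθ 1 0
    have hsp11 : -(A θ) * β r θ * E2f γ r θ = c r 1 1 + μmat θ 1 1 := by
      rw [← hg11 r θ]; exact hsplit r hr θ hθ 1 1
    have hμs : μmat θ 1 0 = μmat θ 0 1 := (hμsymm θ hθ).apply 0 1
    simp only [hKK]
    rw [hinv r hr θ hθ]
    ext i j
    fin_cases i <;> fin_cases j <;>
      simp [Ginv4, tφBlock, Err, Matrix.add_apply, Matrix.smul_apply, smul_eq_mul,
        Matrix.vecHead, Matrix.vecTail]
    · linear_combination E0f f ω γ r θ * hae - hsp00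
    · linear_combination E1f ω γ r θ * hae - hsp01
    · linear_combination (lam r θ)⁻¹ * hae
    · field_simp
      linear_combination hae
    · linear_combination E1f ω γ r θ * hae - hsp10 - hμs
    · linear_combination E2f γ r θ * hae - hsp11
  -- equality of the quadratic forms with the qf normal forms on the region
  have hHq : ∀ w : (Fin 4 → ℝ) × (Fin 4 → ℝ), w.1 1 ∈ Ir → w.1 2 ∈ Iθ →
      quadF4 Kg w = qf (E0f f ω γ) (E1f ω γ) (fun r θ => (lam r θ)⁻¹)
        (fun r θ => (β r θ)⁻¹) (E2f γ) w := fun w h1 h2 =>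
    quadF4_eq_qf (by rw [hKg]; exact hinv _ h1 _ h2)
  have hFq : ∀ w : (Fin 4 → ℝ) × (Fin 4 → ℝ), w.1 1 ∈ Ir → w.1 2 ∈ Iθ →
      quadF4 KK w = qf (fun r θ => B θ * E0f f ω γ r θ - μmat θ 0 0)
        (fun r θ => B θ * E1f ω γ r θ - μmat θ 0 1)
        (fun r θ => B θ * (lam r θ)⁻¹) (fun r θ => A θ + B θ * (β r θ)⁻¹)
        (fun r θ => B θ * E2f γ r θ - μmat θ 1 1) w := fun w h1 h2 =>
    quadF4_eq_qf (hKmat _ h1 _ h2)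
  have memIr : ∀ (i : Fin 4) (s : ℝ), i ≠ 1 → Function.update x i s 1 ∈ Ir :=
    fun i s hi => by rw [Function.update_of_ne (Ne.symm hi)]; exact hx1
  have memIθ : ∀ (i : Fin 4) (s : ℝ), i ≠ 2 → Function.update x i s 2 ∈ Iθ :=
    fun i s hi => by rw [Function.update_of_ne (Ne.symm hi)]; exact hx2
  have memIr1 : ∀ s ∈ Ir, Function.update x 1 s 1 ∈ Ir := fun s hs => by
    rw [Function.update_self]; exact hs
  have memIθ2 : ∀ s ∈ Iθ, Function.update x 2 s 2 ∈ Iθ := fun s hs => by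
    rw [Function.update_self]; exact hs
  -- derivative computations for all needed partial derivatives
  have ev0H : ∀ᶠ s in nhds ((x, p).1 0), quadF4 Kg (Function.update (x, p).1 0 s, (x, p).2)
      = qf (E0f f ω γ) (E1f ω γ) (fun r θ => (lam r θ)⁻¹) (fun r θ => (β r θ)⁻¹) (E2f γ)
        (Function.update (x, p).1 0 s, (x, p).2) :=
    Filter.Eventually.of_forall fun s => hHq _
      (memIr 0 s (by decide)) (memIθ 0 s (by decide))
  have ev3H : ∀ᶠ s in nhds ((x, p).1 3), quadF4 Kg (Function.update (x, p).1 3 s, (x, p).2)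
      = qf (E0f f ω γ) (E1f ω γ) (fun r θ => (lam r θ)⁻¹) (fun r θ => (β r θ)⁻¹) (E2f γ)
        (Function.update (x, p).1 3 s, (x, p).2) :=
    Filter.Eventually.of_forall fun s => hHq _
      (memIr 3 s (by decide)) (memIθ 3 s (by decide))
  have ev1H : ∀ᶠ s in nhds ((x, p).1 1), quadF4 Kg (Function.update (x, p).1 1 s, (x, p).2)
      = qf (E0f f ω γ) (E1f ω γ) (fun r θ => (lam r θ)⁻¹) (fun r θ => (β r θ)⁻¹) (E2f γ)
        (Function.update (x, p).1 1 s, (x, p).2) :=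
    Filter.eventually_of_mem (hIrOpen.mem_nhds hx1) fun s hs => hHq _
      (memIr1 s hs) (memIθ 1 s (by decide))
  have ev2H : ∀ᶠ s in nhds ((x, p).1 2), quadF4 Kg (Function.update (x, p).1 2 s, (x, p).2)
      = qf (E0f f ω γ) (E1f ω γ) (fun r θ => (lam r θ)⁻¹) (fun r θ => (β r θ)⁻¹) (E2f γ)
        (Function.update (x, p).1 2 s, (x, p).2) :=
    Filter.eventually_of_mem (hIθOpen.mem_nhds hx2) fun s hs => hHq _
      (memIr 2 s (by decide)) (memIθ2 s hs)
  have ev0F : ∀ᶠ s in nhds ((x, p).1 0), quadF4 KK (Function.update (x, p).1 0 s, (x, p).2)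
      = qf (fun r θ => B θ * E0f f ω γ r θ - μmat θ 0 0)
        (fun r θ => B θ * E1f ω γ r θ - μmat θ 0 1)
        (fun r θ => B θ * (lam r θ)⁻¹) (fun r θ => A θ + B θ * (β r θ)⁻¹)
        (fun r θ => B θ * E2f γ r θ - μmat θ 1 1) (Function.update (x, p).1 0 s, (x, p).2) :=
    Filter.Eventually.of_forall fun s => hFq _
      (memIr 0 s (by decide)) (memIθ 0 s (by decide))
  have ev3F : ∀ᶠ s in nhds ((x, p).1 3), quadF4 KK (Function.update (x, p).1 3 s, (x, p).2)
      = qf (fun r θ => B θ * E0f f ω γ r θ - μmat θ 0 0)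
        (fun r θ => B θ * E1f ω γ r θ - μmat θ 0 1)
        (fun r θ => B θ * (lam r θ)⁻¹) (fun r θ => A θ + B θ * (β r θ)⁻¹)
        (fun r θ => B θ * E2f γ r θ - μmat θ 1 1) (Function.update (x, p).1 3 s, (x, p).2) :=
    Filter.Eventually.of_forall fun s => hFq _
      (memIr 3 s (by decide)) (memIθ 3 s (by decide))
  have ev1F : ∀ᶠ s in nhds ((x, p).1 1), quadF4 KK (Function.update (x, p).1 1 s, (x, p).2)
      = qf (fun r θ => B θ * E0f f ω γ r θ - μmat θ 0 0)
        (fun r θ => B θ * E1f ω γ r θ - μmat θ 0 1)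
        (fun r θ => B θ * (lam r θ)⁻¹) (fun r θ => A θ + B θ * (β r θ)⁻¹)
        (fun r θ => B θ * E2f γ r θ - μmat θ 1 1) (Function.update (x, p).1 1 s, (x, p).2) :=
    Filter.eventually_of_mem (hIrOpen.mem_nhds hx1) fun s hs => hFq _
      (memIr1 s hs) (memIθ 1 s (by decide))
  have ev2F : ∀ᶠ s in nhds ((x, p).1 2), quadF4 KK (Function.update (x, p).1 2 s, (x, p).2)
      = qf (fun r θ => B θ * E0f f ω γ r θ - μmat θ 0 0)
        (fun r θ => B θ * E1f ω γ r θ - μmat θ 0 1)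
        (fun r θ => B θ * (lam r θ)⁻¹) (fun r θ => A θ + B θ * (β r θ)⁻¹)
        (fun r θ => B θ * E2f γ r θ - μmat θ 1 1) (Function.update (x, p).1 2 s, (x, p).2) :=
    Filter.eventually_of_mem (hIθOpen.mem_nhds hx2) fun s hs => hFq _
      (memIr 2 s (by decide)) (memIθ2 s hs)
  have px0H : pdx 0 (quadF4 Kg) (x, p) = 0 := (pdx_congr ev0H).trans pdx0_qf
  have px3H : pdx 3 (quadF4 Kg) (x, p) = 0 := (pdx_congr ev3H).trans pdx3_qf
  have px0F : pdx 0 (quadF4 KK) (x, p) = 0 := (pdx_congr ev0F).trans pdx0_qf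
  have px3F : pdx 3 (quadF4 KK) (x, p) = 0 := (pdx_congr ev3F).trans pdx3_qf
  have px1H : pdx 1 (quadF4 Kg) (x, p)
      = deriv (fun r' => E0f f ω γ r' (x 2)) (x 1) * p 0 ^ 2
        + 2 * deriv (fun r' => E1f ω γ r' (x 2)) (x 1) * p 0 * p 3
        + (-deriv (fun r' => lam r' (x 2)) (x 1) / lam (x 1) (x 2) ^ 2) * p 1 ^ 2
        + (-deriv (fun r' => β r' (x 2)) (x 1) / β (x 1) (x 2) ^ 2) * p 2 ^ 2
        + deriv (fun r' => E2f γ r' (x 2)) (x 1) * p 3 ^ 2 :=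
    (pdx_congr ev1H).trans (pdx1_qf hE0r hE1r hilr hiβr hE2r)
  have px2H : pdx 2 (quadF4 Kg) (x, p)
      = deriv (fun θ' => E0f f ω γ (x 1) θ') (x 2) * p 0 ^ 2
        + 2 * deriv (fun θ' => E1f ω γ (x 1) θ') (x 2) * p 0 * p 3
        + (-deriv (fun θ' => lam (x 1) θ') (x 2) / lam (x 1) (x 2) ^ 2) * p 1 ^ 2
        + (-deriv (fun θ' => β (x 1) θ') (x 2) / β (x 1) (x 2) ^ 2) * p 2 ^ 2
        + deriv (fun θ' => E2f γ (x 1) θ') (x 2) * p 3 ^ 2 :=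
    (pdx_congr ev2H).trans (pdx2_qf hE0t hE1t hilt hiβt hE2t)
  have px1F : pdx 1 (quadF4 KK) (x, p)
      = B (x 2) * deriv (fun r' => E0f f ω γ r' (x 2)) (x 1) * p 0 ^ 2
        + 2 * (B (x 2) * deriv (fun r' => E1f ω γ r' (x 2)) (x 1)) * p 0 * p 3
        + B (x 2) * (-deriv (fun r' => lam r' (x 2)) (x 1) / lam (x 1) (x 2) ^ 2) * p 1 ^ 2
        + B (x 2) * (-deriv (fun r' => β r' (x 2)) (x 1) / β (x 1) (x 2) ^ 2) * p 2 ^ 2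
        + B (x 2) * deriv (fun r' => E2f γ r' (x 2)) (x 1) * p 3 ^ 2 :=
    (pdx_congr ev1F).trans (pdx1_qf
      ((hE0r.const_mul (B (x 2))).sub_const (μmat (x 2) 0 0))
      ((hE1r.const_mul (B (x 2))).sub_const (μmat (x 2) 0 1))
      (hilr.const_mul (B (x 2)))
      ((hiβr.const_mul (B (x 2))).const_add (A (x 2)))
      ((hE2r.const_mul (B (x 2))).sub_const (μmat (x 2) 1 1)))
  have px2F : pdx 2 (quadF4 KK) (x, p)
      = (deriv B (x 2) * E0f f ω γ (x 1) (x 2)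
          + B (x 2) * deriv (fun θ' => E0f f ω γ (x 1) θ') (x 2)
          - deriv (fun θ' => μmat θ' 0 0) (x 2)) * p 0 ^ 2
        + 2 * (deriv B (x 2) * E1f ω γ (x 1) (x 2)
          + B (x 2) * deriv (fun θ' => E1f ω γ (x 1) θ') (x 2)
          - deriv (fun θ' => μmat θ' 0 1) (x 2)) * p 0 * p 3
        + (deriv B (x 2) * (lam (x 1) (x 2))⁻¹
          + B (x 2) * (-deriv (fun θ' => lam (x 1) θ') (x 2) / lam (x 1) (x 2) ^ 2)) * p 1 ^ 2
        + (deriv A (x 2) + (deriv B (x 2) * (β (x 1) (x 2))⁻¹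
          + B (x 2) * (-deriv (fun θ' => β (x 1) θ') (x 2) / β (x 1) (x 2) ^ 2))) * p 2 ^ 2
        + (deriv B (x 2) * E2f γ (x 1) (x 2)
          + B (x 2) * deriv (fun θ' => E2f γ (x 1) θ') (x 2)
          - deriv (fun θ' => μmat θ' 1 1) (x 2)) * p 3 ^ 2 :=
    (pdx_congr ev2F).trans (pdx2_qf
      ((dB.hasDerivAt.mul hE0t).sub dμ00.hasDerivAt)
      ((dB.hasDerivAt.mul hE1t).sub dμ01.hasDerivAt)
      (dB.hasDerivAt.mul hilt)
      (dA.hasDerivAt.add (dB.hasDerivAt.mul hiβt))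
      ((dB.hasDerivAt.mul hE2t).sub dμ11.hasDerivAt))
  have pp1H : pdp 1 (quadF4 Kg) (x, p) = 2 * (lam (x 1) (x 2))⁻¹ * p 1 :=
    (pdp_congr fun s => hHq (x, Function.update p 1 s) hx1 hx2).trans pdp1_qf
  have pp2H : pdp 2 (quadF4 Kg) (x, p) = 2 * (β (x 1) (x 2))⁻¹ * p 2 :=
    (pdp_congr fun s => hHq (x, Function.update p 2 s) hx1 hx2).trans pdp2_qf
  have pp1F : pdp 1 (quadF4 KK) (x, p) = 2 * (B (x 2) * (lam (x 1) (x 2))⁻¹) * p 1 :=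
    (pdp_congr fun s => hFq (x, Function.update p 1 s) hx1 hx2).trans pdp1_qf
  have pp2F : pdp 2 (quadF4 KK) (x, p)
      = 2 * (A (x 2) + B (x 2) * (β (x 1) (x 2))⁻¹) * p 2 :=
    (pdp_congr fun s => hFq (x, Function.update p 2 s) hx1 hx2).trans pdp2_qf
  -- the structural relations coming from the hypotheses
  have hR1 : deriv α (x 1) = A (x 2) * deriv (fun r' => β r' (x 2)) (x 1) := by
    have hev : α =ᶠ[nhds (x 1)] fun r' => A (x 2) * β r' (x 2) + B (x 2) :=
      Filter.eventually_of_mem (hIrOpen.mem_nhds hx1) fun r' hr' => hαeq r' hr' (x 2) hx2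
    rw [hev.deriv_eq, ((dbr.hasDerivAt.const_mul (A (x 2))).add_const (B (x 2))).deriv]
  have hAne : A (x 2) ≠ 0 := fun h0 => hα' (x 1) hx1 (by rw [hR1, h0, zero_mul])
  have hw : α (x 1) - B (x 2) = A (x 2) * β (x 1) (x 2) := by
    rw [hαeq (x 1) hx1 (x 2) hx2]; ring
  have hwne0 : A (x 2) * β (x 1) (x 2) ≠ 0 := mul_ne_zero hAne bne
  have hwne : α (x 1) - B (x 2) ≠ 0 := by rw [hw]; exact hwne0
  have hBp : deriv B (x 2) = -(deriv A (x 2) * β (x 1) (x 2)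
      + A (x 2) * deriv (fun θ' => β (x 1) θ') (x 2)) := by
    have hev : (fun _ : ℝ => α (x 1)) =ᶠ[nhds (x 2)] fun θ' => A θ' * β (x 1) θ' + B θ' :=
      Filter.eventually_of_mem (hIθOpen.mem_nhds hx2) fun θ' hθ' => hαeq (x 1) hx1 θ' hθ'
    have h1 := hev.deriv_eq
    rw [deriv_const (x 2) (α (x 1)), ((dA.hasDerivAt.fun_mul dbt.hasDerivAt).fun_add dB.hasDerivAt).deriv] at h1
    linarith
  -- the compatibility relation
  have hlog : ∀ θ' ∈ Iθ, deriv (fun r' => Real.log (β r' θ')) (x 1)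
      = deriv α (x 1) / (α (x 1) - B θ') := by
    intro θ' hθ'
    have dbr' : DifferentiableAt ℝ (fun r' => β r' θ') (x 1) :=
      sliceR hIrOpen hIθOpen hβ hx1 hθ'
    have hbne' : β (x 1) θ' ≠ 0 := (hβpos (x 1) hx1 θ' hθ').ne'
    have hR1' : deriv α (x 1) = A θ' * deriv (fun r' => β r' θ') (x 1) := by
      have hev : α =ᶠ[nhds (x 1)] fun r' => A θ' * β r' θ' + B θ' :=
        Filter.eventually_of_mem (hIrOpen.mem_nhds hx1) fun r' hr' => hαeq r' hr' θ' hθ'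
      rw [hev.deriv_eq, ((dbr'.hasDerivAt.const_mul (A θ')).add_const (B θ')).deriv]
    have hAne' : A θ' ≠ 0 := fun h0 => hα' (x 1) hx1 (by rw [hR1', h0, zero_mul])
    rw [(dbr'.hasDerivAt.log hbne').deriv]
    rw [hαeq (x 1) hx1 θ' hθ']
    rw [hR1']
    rw [add_sub_cancel_right]
    rw [mul_div_mul_left _ _ hAne']
  have hR3 : deriv (fun θ' => lam (x 1) θ') (x 2) * (A (x 2) * β (x 1) (x 2))
      + lam (x 1) (x 2) * deriv B (x 2) = 0 := by
    have hev : (fun θ' => lam (x 1) θ' * deriv (fun r' => Real.log (β r' θ')) (x 1))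
        =ᶠ[nhds (x 2)] fun θ' => lam (x 1) θ' * (deriv α (x 1) * (α (x 1) - B θ')⁻¹) :=
      Filter.eventually_of_mem (hIθOpen.mem_nhds hx2) fun θ' hθ' => by
        simp only [hlog θ' hθ', div_eq_mul_inv]
    have hmain := hcompat (x 1) hx1 (x 2) hx2
    rw [hev.deriv_eq] at hmain
    have hDo : HasDerivAt (fun θ' => lam (x 1) θ' * (deriv α (x 1) * (α (x 1) - B θ')⁻¹))
        ((deriv (fun θ' => lam (x 1) θ') (x 2) * (A (x 2) * β (x 1) (x 2))
          + lam (x 1) (x 2) * deriv B (x 2))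
          * (deriv α (x 1) / (A (x 2) * β (x 1) (x 2)) ^ 2)) (x 2) := by
      have hcomb := dlt.hasDerivAt.fun_mul
        (((dB.hasDerivAt.const_sub (α (x 1))).fun_inv hwne).const_mul (deriv α (x 1)))
      apply hda_congr hcomb
      beta_reduce
      rw [hw]
      field_simp
    rw [hDo.deriv] at hmain
    have h3 : deriv α (x 1) / (A (x 2) * β (x 1) (x 2)) ^ 2 ≠ 0 :=
      div_ne_zero (hα' (x 1) hx1) (pow_ne_zero 2 hwne0)
    exact (mul_eq_zero.mp hmain).resolve_right h3
  have hltv : deriv (fun θ' => lam (x 1) θ') (x 2)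
      = lam (x 1) (x 2) * (deriv A (x 2) * β (x 1) (x 2)
        + A (x 2) * deriv (fun θ' => β (x 1) θ') (x 2)) / (A (x 2) * β (x 1) (x 2)) := by
    rw [hBp] at hR3
    field_simp
    linear_combination hR3
  -- derivatives of the μ entries
  have hs00 : ∀ θ' ∈ Iθ, μmat θ' 0 0
      = -(A θ' * β (x 1) θ' * E0f f ω γ (x 1) θ') - c (x 1) 0 0 := fun θ' hθ' => by
    have h := hsplit (x 1) hx1 θ' hθ' 0 0
    rw [hg00 (x 1) θ'] at h
    linarith
  have hs01 : ∀ θ' ∈ Iθ, μmat θ' 0 1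
      = -(A θ' * β (x 1) θ' * E1f ω γ (x 1) θ') - c (x 1) 0 1 := fun θ' hθ' => by
    have h := hsplit (x 1) hx1 θ' hθ' 0 1
    rw [hg01 (x 1) θ'] at h
    linarith
  have hs11 : ∀ θ' ∈ Iθ, μmat θ' 1 1
      = -(A θ' * β (x 1) θ' * E2f γ (x 1) θ') - c (x 1) 1 1 := fun θ' hθ' => by
    have h := hsplit (x 1) hx1 θ' hθ' 1 1
    rw [hg11 (x 1) θ'] at h
    linarith
  have hμ00' : deriv (fun θ' => μmat θ' 0 0) (x 2)
      = -((deriv A (x 2) * β (x 1) (x 2) + A (x 2) * deriv (fun θ' => β (x 1) θ') (x 2))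
          * E0f f ω γ (x 1) (x 2)
        + A (x 2) * β (x 1) (x 2) * deriv (fun θ' => E0f f ω γ (x 1) θ') (x 2)) := by
    have hev : (fun θ' => μmat θ' 0 0) =ᶠ[nhds (x 2)]
        fun θ' => -(A θ' * β (x 1) θ' * E0f f ω γ (x 1) θ') - c (x 1) 0 0 :=
      Filter.eventually_of_mem (hIθOpen.mem_nhds hx2) hs00
    rw [hev.deriv_eq]
    exact (((dA.hasDerivAt.mul dbt.hasDerivAt).mul hE0t).neg.sub_const _).deriv
  have hμ01' : deriv (fun θ' => μmat θ' 0 1) (x 2)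
      = -((deriv A (x 2) * β (x 1) (x 2) + A (x 2) * deriv (fun θ' => β (x 1) θ') (x 2))
          * E1f ω γ (x 1) (x 2)
        + A (x 2) * β (x 1) (x 2) * deriv (fun θ' => E1f ω γ (x 1) θ') (x 2)) := by
    have hev : (fun θ' => μmat θ' 0 1) =ᶠ[nhds (x 2)]
        fun θ' => -(A θ' * β (x 1) θ' * E1f ω γ (x 1) θ') - c (x 1) 0 1 :=
      Filter.eventually_of_mem (hIθOpen.mem_nhds hx2) hs01
    rw [hev.deriv_eq]
    exact (((dA.hasDerivAt.mul dbt.hasDerivAt).mul hE1t).neg.sub_const _).deriv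
  have hμ11' : deriv (fun θ' => μmat θ' 1 1) (x 2)
      = -((deriv A (x 2) * β (x 1) (x 2) + A (x 2) * deriv (fun θ' => β (x 1) θ') (x 2))
          * E2f γ (x 1) (x 2)
        + A (x 2) * β (x 1) (x 2) * deriv (fun θ' => E2f γ (x 1) θ') (x 2)) := by
    have hev : (fun θ' => μmat θ' 1 1) =ᶠ[nhds (x 2)]
        fun θ' => -(A θ' * β (x 1) θ' * E2f γ (x 1) θ') - c (x 1) 1 1 :=
      Filter.eventually_of_mem (hIθOpen.mem_nhds hx2) hs11
    rw [hev.deriv_eq]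
    exact (((dA.hasDerivAt.mul dbt.hasDerivAt).mul hE2t).neg.sub_const _).deriv
  -- assemble
  unfold poisson
  rw [Fin.sum_univ_four]
  rw [px0H, px3H, px0F, px3F, px1H, px2H, px1F, px2F, pp1H, pp2H, pp1F, pp2F]
  rw [hμ00', hμ01', hμ11', hBp, hltv]
  field_simp
  ring
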